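/- Let (X,d) be a sequentially Yoneda-complete T1 bounded quasi-metric space and let K ∈ K_0(X). Then any two standard representations of K are ∼-equivalent ω-chains in P_fin(BX); consequently the class K* is well-defined, i.e., independent of the chosen standard representation. -/

import Mathlib

open scoped NNReal

/-! Generic sequence notions for an arbitrary "distance" function `ρ`. -/

def IsCauchySeq {α : Type _} (ρ : α → α → ℝ) (u : ℕ → α) : Prop :=
  ∀ ε : ℝ, 0 < ε → ∃ N, ∀ n m, N ≤ n → n ≤ m → ρ (u n) (u m) < ε

def IsBiCauchySeq {α : Type _} (ρ : α → α → ℝ) (u : ℕ → α) : Prop :=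
  ∀ ε : ℝ, 0 < ε → ∃ N, ∀ n m, N ≤ n → N ≤ m → ρ (u n) (u m) < ε

/-- `sup_{m ≥ n} ρ (u m) y`. -/
noncomputable def supTail {α : Type _} (ρ : α → α → ℝ) (u : ℕ → α) (y : α) (n : ℕ) : ℝ :=
  sSup {t | ∃ m, n ≤ m ∧ t = ρ (u m) y}

/-- `x` is a Yoneda limit of `u`:  `ρ x y = inf_n sup_{m ≥ n} ρ (u m) y` for all `y`. -/
def IsYonedaLim {α : Type _} (ρ : α → α → ℝ) (u : ℕ → α) (x : α) : Prop :=
  ∀ y, ρ x y = sInf (Set.range (supTail ρ u y))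

def SeqYonedaCompleteD {α : Type _} (ρ : α → α → ℝ) : Prop :=
  ∀ u, IsCauchySeq ρ u → ∃ x, IsYonedaLim ρ u x

/-- Smyth completeness: every Cauchy sequence converges in the symmetrized metric. -/
def SmythCompleteD {α : Type _} (ρ : α → α → ℝ) : Prop :=
  ∀ u, IsCauchySeq ρ u → ∃ x, ∀ ε : ℝ, 0 < ε → ∃ N, ∀ n, N ≤ n →
    max (ρ x (u n)) (ρ (u n) x) < ε

/-- `inf_{m ≥ n} ρ e (u m)`. -/
noncomputable def infTail {α : Type _} (ρ : α → α → ℝ) (u : ℕ → α) (e : α) (n : ℕ) : ℝ :=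
  sInf {t | ∃ m, n ≤ m ∧ t = ρ e (u m)}

/-- `e` is a finite point: for every Cauchy sequence `u` with Yoneda limit `x`,
`ρ e x = sup_n inf_{m ≥ n} ρ e (u m)`. -/
def IsFinitePoint {α : Type _} (ρ : α → α → ℝ) (e : α) : Prop :=
  ∀ u x, IsCauchySeq ρ u → IsYonedaLim ρ u x →
    ρ e x = sSup (Set.range (infTail ρ u e))

/-- ω-algebraic: a countable set of finite points such that every point is a Yoneda limit
of a Cauchy sequence of points from it. -/
def OmegaAlgebraicD {α : Type _} (ρ : α → α → ℝ) : Prop :=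
  ∃ X0 : Set α, X0.Countable ∧ (∀ e ∈ X0, IsFinitePoint ρ e) ∧
    ∀ x, ∃ u : ℕ → α, (∀ n, u n ∈ X0) ∧ IsCauchySeq ρ u ∧ IsYonedaLim ρ u x

/-- A quasi-metric on `X`. -/
structure QuasiMetric (X : Type _) : Type _ where
  d : X → X → ℝ
  nonneg : ∀ x y, 0 ≤ d x y
  triangle : ∀ x y z, d x z ≤ d x y + d y z
  eq_iff : ∀ x y, x = y ↔ d x y = 0 ∧ d y x = 0

/-- Formal balls over `X`. -/
abbrev FB (X : Type _) := X × ℝ≥0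

/-- Nonempty finite subsets of the space of formal balls. -/
def PFin (X : Type _) : Type _ := {F : Set (FB X) // F.Finite ∧ F.Nonempty}

namespace QuasiMetric

variable {X : Type _} (Q : QuasiMetric X)

def IsT1 : Prop := ∀ x y, Q.d x y = 0 → x = y

def Bounded : Prop := ∃ C : ℝ, ∀ x y, Q.d x y ≤ C

def ball (x : X) (ε : ℝ) : Set X := {y | Q.d x y < ε}

/-- The topology `τ_d` induced by the quasi-metric. -/
def tau : TopologicalSpace X :=
  TopologicalSpace.generateFrom {s | ∃ x ε, 0 < ε ∧ s = Q.ball x ε}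

def dstar (x y : X) : ℝ := max (Q.d x y) (Q.d y x)

def SeqYonedaComplete : Prop := SeqYonedaCompleteD Q.d

def SmythComplete : Prop := SmythCompleteD Q.d

/-- `K` is `d⁻¹`-precompact. -/
def dInvPrecompact (K : Set X) : Prop :=
  ∀ ε : ℝ, 0 < ε → ∃ F : Set X, F.Finite ∧ F ⊆ K ∧ ∀ k ∈ K, ∃ x ∈ F, Q.d k x < ε

/-- The nonempty compact subsets of `(X, τ_d)`. -/
def K0 : Set (Set X) := {K | K.Nonempty ∧ @IsCompact X Q.tau K}

noncomputable def dPtSet (x : X) (B : Set X) : ℝ := sInf {t | ∃ b ∈ B, t = Q.d x b}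

noncomputable def dSetPt (A : Set X) (y : X) : ℝ := sInf {t | ∃ a ∈ A, t = Q.d a y}

/-- The Hausdorff quasi-metric. -/
noncomputable def Hd (A B : Set X) : ℝ :=
  max (sSup {t | ∃ b ∈ B, t = Q.dSetPt A b}) (sSup {t | ∃ a ∈ A, t = Q.dPtSet a B})

/-- Order on formal balls: `(x,r) ⊑ (y,s)  ↔  d x y ≤ r - s`. -/
def ble (a b : FB X) : Prop := Q.d a.1 b.1 ≤ (a.2 : ℝ) - (b.2 : ℝ)

/-- Auxiliary relation: `(x,r) ≺ (y,s)  ↔  d x y < r - s`. -/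
def blt (a b : FB X) : Prop := Q.d a.1 b.1 < (a.2 : ℝ) - (b.2 : ℝ)

def iota (x : X) : FB X := (x, 0)

/-- The quasi-metric `q` on formal balls. -/
noncomputable def q (a b : FB X) : ℝ :=
  max (Q.d a.1 b.1) |(a.2 : ℝ) - (b.2 : ℝ)| + ((b.2 : ℝ) - (a.2 : ℝ))

/-- The Egli–Milner relation `≺_EM` on nonempty finite sets of formal balls. -/
def em (F G : PFin X) : Prop :=
  (∀ b ∈ G.1, ∃ a ∈ F.1, Q.blt a b) ∧ (∀ a ∈ F.1, ∃ b ∈ G.1, Q.blt a b)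

/-- The non-strict Egli–Milner relation `⊑_EM`. -/
def emLE (F G : PFin X) : Prop :=
  (∀ a ∈ F.1, ∃ b ∈ G.1, Q.ble a b) ∧ (∀ b ∈ G.1, ∃ a ∈ F.1, Q.ble a b)

/-- `rF = max { r : (x,r) ∈ F }`. -/
noncomputable def rF (F : PFin X) : ℝ := sSup {t | ∃ p ∈ F.1, t = (p.2 : ℝ)}

/-- `δ(F,G) = min {(r-s) - d x y : (x,r) ∈ F, (y,s) ∈ G, (x,r) ≺ (y,s)}`. -/
noncomputable def delta (F G : PFin X) : ℝ :=
  sInf {t | ∃ a ∈ F.1, ∃ b ∈ G.1, Q.blt a b ∧ t = ((a.2 : ℝ) - (b.2 : ℝ)) - Q.d a.1 b.1}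

/-- The Hausdorff quasi-metric `H_q` on `P_fin(BX)` induced by `q`. -/
noncomputable def Hq (F G : PFin X) : ℝ :=
  max (sSup {t | ∃ a ∈ F.1, t = sInf {s | ∃ b ∈ G.1, s = Q.q a b}})
      (sSup {t | ∃ b ∈ G.1, t = sInf {s | ∃ a ∈ F.1, s = Q.q a b}})

/-- ω-chains in `(P_fin(BX), ≺_EM)`; `c n` plays the role of `F_{n+1}`. -/
def Chain : Type _ := {c : ℕ → PFin X // ∀ n, Q.em (c n) (c (n + 1))}

def chainLE (c c' : Q.Chain) : Prop := ∀ n, ∃ m, Q.em (c.1 n) (c'.1 m)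

def chainEquiv (c c' : Q.Chain) : Prop := Q.chainLE c c' ∧ Q.chainLE c' c

lemma blt_trans {a b c : FB X} (h1 : Q.blt a b) (h2 : Q.blt b c) : Q.blt a c := by
  have h3 := Q.triangle a.1 b.1 c.1
  unfold blt at h1 h2 ⊢
  linarith

lemma em_trans {F G H : PFin X} (h1 : Q.em F G) (h2 : Q.em G H) : Q.em F H := by
  constructor
  · intro b hb
    obtain ⟨a, ha, hab⟩ := h2.1 b hb
    obtain ⟨a', ha', h'⟩ := h1.1 a ha
    exact ⟨a', ha', Q.blt_trans h' hab⟩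
  · intro a ha
    obtain ⟨b, hb, hab⟩ := h1.2 a ha
    obtain ⟨c, hc, hbc⟩ := h2.2 b hb
    exact ⟨c, hc, Q.blt_trans hab hbc⟩

lemma chainLE_refl (c : Q.Chain) : Q.chainLE c c := fun n => ⟨n + 1, c.2 n⟩

lemma chainLE_trans {a b c : Q.Chain} (h1 : Q.chainLE a b) (h2 : Q.chainLE b c) :
    Q.chainLE a c := by
  intro n
  obtain ⟨m, hm⟩ := h1 n
  obtain ⟨k, hk⟩ := h2 m
  exact ⟨k, Q.em_trans hm hk⟩

def chainSetoid : Setoid Q.Chain where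
  r := Q.chainEquiv
  iseqv := ⟨fun c => ⟨Q.chainLE_refl c, Q.chainLE_refl c⟩,
    fun h => ⟨h.2, h.1⟩,
    fun h1 h2 => ⟨Q.chainLE_trans h1.1 h2.1, Q.chainLE_trans h2.2 h1.2⟩⟩

/-- The ω-Plotkin domain `CBX`: equivalence classes of ω-chains in `(P_fin(BX), ≺_EM)`. -/
def CBX : Type _ := Quotient Q.chainSetoid

/-- The partial order of `CBX`. -/
def cbLE : Q.CBX → Q.CBX → Prop :=
  Quotient.lift₂ Q.chainLE (by
    intro a b a' b' ha hb
    have ha' : Q.chainEquiv a a' := ha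
    have hb' : Q.chainEquiv b b' := hb
    exact propext ⟨fun h => Q.chainLE_trans (Q.chainLE_trans ha'.2 h) hb'.1,
      fun h => Q.chainLE_trans (Q.chainLE_trans ha'.1 h) hb'.2⟩)

def chainWB (c c' : Q.Chain) : Prop := ∃ m, ∀ n, Q.em (c.1 n) (c'.1 m)

/-- The way-below relation of `CBX`. -/
def cbWB : Q.CBX → Q.CBX → Prop :=
  Quotient.lift₂ Q.chainWB (by
    intro a b a' b' ha hb
    have ha' : Q.chainEquiv a a' := ha
    have hb' : Q.chainEquiv b b' := hb
    apply propext
    constructor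
    · rintro ⟨m, hm⟩
      obtain ⟨k, hk⟩ := hb'.1 m
      refine ⟨k, fun n => ?_⟩
      obtain ⟨p, hp⟩ := ha'.2 n
      exact Q.em_trans hp (Q.em_trans (hm p) hk)
    · rintro ⟨m, hm⟩
      obtain ⟨k, hk⟩ := hb'.2 m
      refine ⟨k, fun n => ?_⟩
      obtain ⟨p, hp⟩ := ha'.1 n
      exact Q.em_trans hp (Q.em_trans (hm p) hk))

/-- The Scott topology of `CBX`, generated by the sets `↟I`. -/
def scottTop : TopologicalSpace Q.CBX :=
  TopologicalSpace.generateFrom {s | ∃ I : Q.CBX, s = {J | Q.cbWB I J}}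

def upSet (F : PFin X) : Set (FB X) := {b | ∃ a ∈ F.1, Q.ble a b}

/-- `I⁺ = ⋂_n ↑F_n` for a representing chain. -/
def Iplus (c : Q.Chain) : Set (FB X) := ⋂ n, Q.upSet (c.1 n)

noncomputable def IplusQ (I : Q.CBX) : Set (FB X) := Q.Iplus (Quotient.out I)

/-- `r̄ I = inf { rF : F occurs in some chain representing I }`. -/
noncomputable def rbar (I : Q.CBX) : ℝ :=
  sInf {t | ∃ c : Q.Chain, Quotient.mk Q.chainSetoid c = I ∧ ∃ n, t = rF (c.1 n)}

/-- `c` is a standard representation of `K`: `c n` (playing the role of `F_{n+1}`) is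
`{(x_i^j, 1/(n+1)) : 1 ≤ j ≤ n+1, 1 ≤ i ≤ m_j}` where the `x_i^j ∈ K` satisfy
`∀ y ∈ K, ∃ i, d (x_i^j) y < 1/(2 j²)`. -/
def IsStdRep (K : Set X) (c : Q.Chain) : Prop :=
  ∃ (m : ℕ → ℕ) (x : ℕ → ℕ → X),
    (∀ j i, 1 ≤ j → 1 ≤ i → i ≤ m j → x j i ∈ K) ∧
    (∀ j, 1 ≤ j → ∀ y ∈ K, ∃ i, 1 ≤ i ∧ i ≤ m j ∧ Q.d (x j i) y < 1 / (2 * (j : ℝ) ^ 2)) ∧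
    (∀ n : ℕ, (c.1 n).1 =
      {p : FB X | ∃ j i, 1 ≤ j ∧ j ≤ n + 1 ∧ 1 ≤ i ∧ i ≤ m j ∧
        p = (x j i, ((n : ℝ≥0) + 1)⁻¹)})

/-- `D` on representing chains: `sup_n inf_m H_q(F_n, G_m)`. -/
noncomputable def Dchain (c c' : Q.Chain) : ℝ :=
  sSup {t | ∃ n, t = sInf {s | ∃ m, s = Q.Hq (c.1 n) (c'.1 m)}}

/-- The quasi-metric `D` on `CBX`. -/
noncomputable def D (I J : Q.CBX) : ℝ := Q.Dchain (Quotient.out I) (Quotient.out J)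

/-- The topology induced by `D` on `CBX`. -/
def DTop : TopologicalSpace Q.CBX :=
  TopologicalSpace.generateFrom
    {s | ∃ (I : Q.CBX) (ε : ℝ), 0 < ε ∧ s = {J | Q.D I J < ε}}

/-- The hyperspace `K_0(X)` as a type. -/
def K0T : Type _ := {K : Set X // K.Nonempty ∧ @IsCompact X Q.tau K}

/-- The Vietoris topology on `K_0(X)`. -/
def vietoris : TopologicalSpace Q.K0T :=
  TopologicalSpace.generateFrom
    ({s | ∃ V : Set X, @IsOpen X Q.tau V ∧ s = {K : Q.K0T | (K.1 ∩ V).Nonempty}} ∪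
     {s | ∃ V : Set X, @IsOpen X Q.tau V ∧ s = {K : Q.K0T | K.1 ⊆ V}})

/-- The topology of the Hausdorff quasi-metric on `K_0(X)`. -/
def hdTop : TopologicalSpace Q.K0T :=
  TopologicalSpace.generateFrom
    {s | ∃ (K : Q.K0T) (ε : ℝ), 0 < ε ∧ s = {L : Q.K0T | Q.Hd K.1 L.1 < ε}}

/-- Round ideals of `(P_fin(BX), ≺_EM)`. -/
def IsRoundIdeal (I : Set (PFin X)) : Prop :=
  I.Nonempty ∧ (∀ F G : PFin X, Q.em F G → G ∈ I → F ∈ I) ∧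
  (∀ F ∈ I, ∀ G ∈ I, ∃ H ∈ I, Q.em F H ∧ Q.em G H)

end QuasiMetric

/-
Write `(F_n)`, `(G_m)` for the two standard representations. A ball `(y, 1/(M+1))` of `G_M`
lies above the ball of `F_n` whose centre is `1/(2(n+1)²)`-close to `y` once
`M + 1 ≥ 2(n+1)²`. For the converse, follow the chain `(F_k)` upwards from a ball
`a = (x, 1/(n+1))` of `F_n`: the centres form a Cauchy sequence in `K` whose Yoneda limit `z`
satisfies `d x z < 1/(n+1)`. Centres of the `G_m` approximating this sequence accumulate, by
compactness of `K`, at a point `β` with `d β ≤ d z`, so `β = z` by T1. Hence some centre of a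
`G_m` is arbitrarily `d`-close to `z`, and the ball of `G_M` around it lies above `a` for all
large `M`.
-/

open Filter Topology

lemma eventually_inv_natCast_add_one_lt {ε : ℝ} (hε : 0 < ε) :
    ∀ᶠ M : ℕ in atTop, ((M : ℝ) + 1)⁻¹ < ε :=
  (tendsto_order.1 (by
    simpa only [one_div] using tendsto_one_div_add_atTop_nhds_zero_nat (𝕜 := ℝ))).2 ε hε

lemma two_mul_inv_two_mul_sq_le (n : ℕ) :
    2 * (2 * ((n : ℝ) + 1) ^ 2)⁻¹ ≤ ((n : ℝ) + 1)⁻¹ := by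
  have hn : (1 : ℝ) ≤ (n : ℝ) + 1 := by linarith [n.cast_nonneg (α := ℝ)]
  rw [mul_inv, ← mul_assoc, mul_inv_cancel₀ two_ne_zero, one_mul]
  exact inv_anti₀ (by positivity) (by nlinarith)

namespace QuasiMetric

variable {X : Type*} (Q : QuasiMetric X)

lemma d_self (x : X) : Q.d x x = 0 := ((Q.eq_iff x x).mp rfl).1

lemma ble_of_blt_succ {A : ℕ → FB X} (hA : ∀ k, Q.blt (A k) (A (k + 1))) {k l : ℕ}
    (hkl : k ≤ l) : Q.ble (A k) (A l) := by
  induction l, hkl using Nat.le_induction with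
  | base => simp [ble, Q.d_self]
  | succ l _ ih =>
    have h := hA l
    unfold ble blt at *
    linarith [Q.triangle (A k).1 (A l).1 (A (l + 1)).1]

lemma d_le_radius_of_blt_succ {A : ℕ → FB X} (hA : ∀ k, Q.blt (A k) (A (k + 1))) {k l : ℕ}
    (hkl : k ≤ l) : Q.d (A k).1 (A l).1 ≤ (A k).2 := by
  have h := Q.ble_of_blt_succ hA hkl
  unfold ble at h
  linarith [(A l).2.coe_nonneg]

lemma isCauchySeq_of_d_le {u : ℕ → X} {R : ℕ → ℝ}
    (hu : ∀ k l, k ≤ l → Q.d (u k) (u l) ≤ R k)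
    (hR : Tendsto R atTop (𝓝 0)) : IsCauchySeq Q.d u := by
  intro ε hε
  obtain ⟨N, hN⟩ := eventually_atTop.1 ((tendsto_order.1 hR).2 ε hε)
  exact ⟨N, fun n m hn hnm => (hu n m hnm).trans_lt (hN n hn)⟩

lemma d_le_d_yonedaLim_add (hB : Q.Bounded) {u : ℕ → X} {z : X} (hz : IsYonedaLim Q.d u z)
    {R : ℕ → ℝ} (hu : ∀ k l, k ≤ l → Q.d (u k) (u l) ≤ R k) (k : ℕ) (y : X) :
    Q.d (u k) y ≤ Q.d z y + R k := by
  obtain ⟨C, hC⟩ := hB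
  suffices Q.d (u k) y - R k ≤ sInf (Set.range (supTail Q.d u y)) by linarith [hz y]
  refine le_csInf (Set.range_nonempty _) ?_
  rintro _ ⟨L, rfl⟩
  have hsup : Q.d (u (max k L)) y ≤ supTail Q.d u y L :=
    le_csSup ⟨C, by rintro t ⟨m, -, rfl⟩; exact hC _ _⟩ ⟨max k L, le_max_right _ _, rfl⟩
  linarith [Q.triangle (u k) (u (max k L)) y, hu k (max k L) (le_max_left _ _)]

lemma eq_yonedaLim_of_frequently_d_lt (hT1 : Q.IsT1) (hB : Q.Bounded) {u : ℕ → X} {z : X}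
    (hz : IsYonedaLim Q.d u z) {R : ℕ → ℝ} (hu : ∀ k l, k ≤ l → Q.d (u k) (u l) ≤ R k)
    (hR : Tendsto R atTop (𝓝 0)) {b : ℕ → X} (hb : ∀ k, Q.d (b k) (u k) ≤ R k) {β : X}
    (hβ : ∀ ε > 0, ∃ᶠ k in atTop, Q.d β (b k) < ε) : β = z := by
  have hle : ∀ y, Q.d β y ≤ Q.d z y := by
    intro y
    refine le_of_forall_pos_lt_add fun ε hε => ?_
    obtain ⟨k, hβk, hRk⟩ := ((hβ (ε / 3) (by positivity)).and_eventually
      ((tendsto_order.1 hR).2 (ε / 3) (by positivity))).exists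
    linarith [Q.triangle β (b k) y, Q.triangle (b k) (u k) y, hb k,
      Q.d_le_d_yonedaLim_add hB hz hu k y]
  exact hT1 β z (le_antisymm (by simpa [Q.d_self] using hle z) (Q.nonneg β z))

lemma exists_frequently_d_lt_of_isCompact {K : Set X} (hK : @IsCompact X Q.tau K) {b : ℕ → X}
    (hb : ∀ k, b k ∈ K) : ∃ β ∈ K, ∀ ε > 0, ∃ᶠ k in atTop, Q.d β (b k) < ε := by
  let _ := Q.tau
  obtain ⟨β, hβK, hβ⟩ :=
    hK.exists_mapClusterPt (f := atTop) (tendsto_principal.2 (.of_forall hb))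
  refine ⟨β, hβK, fun ε hε => mapClusterPt_iff_frequently.1 hβ (Q.ball β ε) ?_⟩
  have hball : IsOpen (Q.ball β ε) := TopologicalSpace.GenerateOpen.basic _ ⟨β, ε, hε, rfl⟩
  exact hball.mem_nhds (by simpa [ball, Q.d_self] using hε)

lemma exists_seq_blt_of_mem (c : Q.Chain) {n : ℕ} {a : FB X} (ha : a ∈ (c.1 n).1) :
    ∃ A : ℕ → FB X, A 0 = a ∧ (∀ k, A k ∈ (c.1 (n + k)).1) ∧
      ∀ k, Q.blt (A k) (A (k + 1)) := by
  choose f hfc hf using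
    fun (k : ℕ) (b : FB X) (hb : b ∈ (c.1 (n + k)).1) => (c.2 (n + k)).2 b hb
  let A : ∀ k : ℕ, {b : FB X // b ∈ (c.1 (n + k)).1} :=
    fun k => Nat.rec ⟨a, ha⟩ (fun k p => ⟨f k p.1 p.2, hfc k p.1 p.2⟩) k
  exact ⟨fun k => (A k).1, rfl, fun k => (A k).2, fun k => hf k (A k).1 (A k).2⟩

lemma eventually_em_of_eventually {F : PFin X} {G : ℕ → PFin X}
    (hdown : ∀ᶠ M in atTop, ∀ b ∈ (G M).1, ∃ a ∈ F.1, Q.blt a b)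
    (hup : ∀ a ∈ F.1, ∀ᶠ M in atTop, ∃ b ∈ (G M).1, Q.blt a b) :
    ∀ᶠ M in atTop, Q.em F (G M) :=
  hdown.and ((eventually_all_finite F.2.1).2 hup)

namespace IsStdRep

variable {Q} {K : Set X} {c c' : Q.Chain}

lemma mem_chain (hc : Q.IsStdRep K c) {n : ℕ} {p : FB X} (hp : p ∈ (c.1 n).1) :
    p.1 ∈ K ∧ (p.2 : ℝ) = ((n : ℝ) + 1)⁻¹ := by
  obtain ⟨m, x, hxK, -, hset⟩ := hc
  rw [hset n] at hp
  obtain ⟨j, i, hj, -, hi, him, rfl⟩ := hp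
  exact ⟨hxK j i hj hi him, by push_cast; rfl⟩

lemma exists_mem_chain_d_lt (hc : Q.IsStdRep K c) (j : ℕ) {y : X} (hy : y ∈ K) :
    ∃ x ∈ K, Q.d x y < (2 * ((j : ℝ) + 1) ^ 2)⁻¹ ∧
      ∀ M, j ≤ M → (x, ((M : ℝ≥0) + 1)⁻¹) ∈ (c.1 M).1 := by
  obtain ⟨m, x, hxK, hcov, hset⟩ := hc
  obtain ⟨i, hi, him, hd⟩ := hcov (j + 1) (by omega) y hy
  refine ⟨x (j + 1) i, hxK _ _ (by omega) hi him, by simpa [one_div] using hd, fun M hM => ?_⟩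
  rw [hset M]
  exact ⟨j + 1, i, by omega, by omega, hi, him, rfl⟩

lemma eventually_forall_exists_blt (hc : Q.IsStdRep K c) (hc' : Q.IsStdRep K c') (n : ℕ) :
    ∀ᶠ M in atTop, ∀ b ∈ (c'.1 M).1, ∃ a ∈ (c.1 n).1, Q.blt a b := by
  filter_upwards [eventually_inv_natCast_add_one_lt (by positivity :
    (0 : ℝ) < (2 * ((n : ℝ) + 1) ^ 2)⁻¹)] with M hM b hb
  obtain ⟨hbK, hbr⟩ := hc'.mem_chain hb
  obtain ⟨x, -, hxb, hxc⟩ := hc.exists_mem_chain_d_lt n hbK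
  refine ⟨_, hxc n le_rfl, ?_⟩
  show Q.d x b.1 < ((((n : ℝ≥0) + 1)⁻¹ : ℝ≥0) : ℝ) - b.2
  push_cast
  linarith [two_mul_inv_two_mul_sq_le n]

lemma eventually_exists_blt (hT1 : Q.IsT1) (hB : Q.Bounded) (hY : Q.SeqYonedaComplete)
    (hK : @IsCompact X Q.tau K) (hc : Q.IsStdRep K c) (hc' : Q.IsStdRep K c') {n : ℕ}
    {a : FB X} (ha : a ∈ (c.1 n).1) : ∀ᶠ M in atTop, ∃ b ∈ (c'.1 M).1, Q.blt a b := by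
  obtain ⟨A, rfl, hAc, hA⟩ := Q.exists_seq_blt_of_mem c ha
  set u : ℕ → X := fun k => (A k).1
  set R : ℕ → ℝ := fun k => (A k).2
  have hu : ∀ k l, k ≤ l → Q.d (u k) (u l) ≤ R k := fun k l => Q.d_le_radius_of_blt_succ hA
  have hR_eq : ∀ k, R k = (((n + k : ℕ) : ℝ) + 1)⁻¹ := fun k => (hc.mem_chain (hAc k)).2
  have hR : Tendsto R atTop (𝓝 0) := by
    refine ((tendsto_one_div_add_atTop_nhds_zero_nat (𝕜 := ℝ)).comp
      (tendsto_add_atTop_nat n)).congr fun k => ?_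
    simp [hR_eq, add_comm]
  obtain ⟨z, hz⟩ := hY u (Q.isCauchySeq_of_d_le hu hR)
  -- covering at level `n + k + 1` keeps the error of `b k` below the radius `R k`
  choose b hbK hbu hbc' using fun k => hc'.exists_mem_chain_d_lt (n + k) (hc.mem_chain (hAc k)).1
  have hbu' : ∀ k, Q.d (b k) (u k) ≤ R k := fun k => by
    linarith [hbu k, hR_eq k, two_mul_inv_two_mul_sq_le (n + k),
      (by positivity : (0 : ℝ) < (2 * (((n + k : ℕ) : ℝ) + 1) ^ 2)⁻¹)]
  obtain ⟨β, -, hβ⟩ := Q.exists_frequently_d_lt_of_isCompact hK hbK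
  obtain rfl := Q.eq_yonedaLim_of_frequently_d_lt hT1 hB hz hu hR hbu' hβ
  have hγ : 0 < R 0 - Q.d (u 0) β := by
    have h01 : Q.d (u 0) (u 1) < R 0 - R 1 := hA 0
    linarith [Q.triangle (u 0) (u 1) β, Q.d_le_d_yonedaLim_add hB hz hu 1 β, Q.d_self β]
  obtain ⟨k, hk⟩ := (hβ _ (half_pos hγ)).exists
  filter_upwards [eventually_ge_atTop (n + k), eventually_inv_natCast_add_one_lt (half_pos hγ)]
    with M hkM hM
  refine ⟨_, hbc' k M hkM, ?_⟩
  show Q.d (u 0) (b k) < R 0 - ((((M : ℝ≥0) + 1)⁻¹ : ℝ≥0) : ℝ)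
  push_cast
  linarith [Q.triangle (u 0) β (b k)]

lemma chainLE (hT1 : Q.IsT1) (hB : Q.Bounded) (hY : Q.SeqYonedaComplete)
    (hK : @IsCompact X Q.tau K) (hc : Q.IsStdRep K c) (hc' : Q.IsStdRep K c') :
    Q.chainLE c c' := fun n =>
  (Q.eventually_em_of_eventually (hc.eventually_forall_exists_blt hc' n)
    fun _ ha => hc.eventually_exists_blt hT1 hB hY hK hc' ha).exists

end IsStdRep

end QuasiMetric

/-- any two standard representations of a nonempty compact `K` are ∼-equivalent,
hence `K*` is well-defined. -/
theorem stmt3 {X : Type} (Q : QuasiMetric X) (hT1 : Q.IsT1) (hB : Q.Bounded)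
    (hY : Q.SeqYonedaComplete) (K : Set X) (hK : K ∈ Q.K0) (c c' : Q.Chain)
    (hc : Q.IsStdRep K c) (hc' : Q.IsStdRep K c') :
    Q.chainEquiv c c' ∧
      Quotient.mk Q.chainSetoid c = Quotient.mk Q.chainSetoid c' := by
  have h : Q.chainEquiv c c' :=
    ⟨hc.chainLE hT1 hB hY hK.2 hc', hc'.chainLE hT1 hB hY hK.2 hc⟩
  exact ⟨h, Quotient.sound h⟩
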